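/- In the free left distributive magma A on one generator x, for every element p there exists N such that p <_L x^(n) for all n ≥ N, where x^(0) = x and x^(n+1) = x^(n) · x^(n). -/

import Mathlib

/-- Equivalence of terms under the left distributive law. -/
inductive LDRel : FreeMagma Unit → FreeMagma Unit → Prop
  | ld : ∀ a b c, LDRel (a * (b * c)) ((a * b) * (a * c))
  | refl : ∀ a, LDRel a a
  | symm : ∀ {a b}, LDRel a b → LDRel b a
  | trans : ∀ {a b c}, LDRel a b → LDRel b c → LDRel a c
  | mul_congr : ∀ {a b c d}, LDRel a b → LDRel c d → LDRel (a * c) (b * d)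

/-- The free left distributive magma on one generator. -/
def FreeLD : Type := Quot LDRel

/-- Multiplication on the free left distributive magma. -/
def FreeLD.mul : FreeLD → FreeLD → FreeLD :=
  Quot.map₂ (· * ·) (fun a _ _ h => LDRel.mul_congr (LDRel.refl a) h)
    (fun _ _ b h => LDRel.mul_congr h (LDRel.refl b))

/-- The generator `x` of the free left distributive magma. -/
def FreeLD.x : FreeLD := Quot.mk _ (FreeMagma.of ())

/-- `LtL mul u w` : `w = (...((u·c₁)·c₂)...)·cₙ` for some `n ≥ 1`. -/
def LtL {M : Type*} (mul : M → M → M) (u w : M) : Prop :=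
  ∃ l : List M, l ≠ [] ∧ w = l.foldl mul u

/-- Iterated squares: `w^(0) = w`, `w^(n+1) = w^(n) · w^(n)`. -/
def iterSq {M : Type*} (mul : M → M → M) (w : M) : ℕ → M
  | 0 => w
  | n + 1 => mul (iterSq mul w n) (iterSq mul w n)

/-!
By left distributivity, `t · w^(n) = w^(n+1)` implies
`t · w^(n+1) = (t · w^(n)) · (t · w^(n)) = w^(n+2)`, so such an equation persists at all higher
levels. The elements `t` satisfying it at some level contain `x` (level 0) and are closed under
products: `(a·b) · w^(n+1) = (a·b) · (a · w^(n)) = a · (b · w^(n)) = a · w^(n+1) = w^(n+2)`.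
Hence every `p` satisfies `p · x^(n) = x^(n+1)` for some `n`, and then
`x^(m) = (…((p · x^(n)) · x^(n+1))…) · x^(m-1)` for every `m > n`.
-/

section LeftDistrib

variable {M : Type*} {mul : M → M → M}

lemma ltL_mul (u c : M) : LtL mul u (mul u c) :=
  ⟨[c], List.cons_ne_nil _ _, rfl⟩

lemma LtL.mul_right {u w : M} (h : LtL mul u w) (c : M) : LtL mul u (mul w c) := by
  obtain ⟨l, -, rfl⟩ := h
  exact ⟨l ++ [c], by simp, by rw [List.foldl_append, List.foldl_cons, List.foldl_nil]⟩

lemma ltL_iterSq_of_mul_iterSq {t w : M} {n : ℕ}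
    (h : mul t (iterSq mul w n) = iterSq mul w (n + 1)) {m : ℕ} (hnm : n < m) :
    LtL mul t (iterSq mul w m) := by
  induction m, hnm using Nat.le_induction with
  | base => exact h ▸ ltL_mul t _
  | succ m _ ih => exact ih.mul_right _

lemma mul_iterSq_succ
    (hld : ∀ a b c, mul a (mul b c) = mul (mul a b) (mul a c)) {t w : M} {n : ℕ}
    (h : mul t (iterSq mul w n) = iterSq mul w (n + 1)) :
    mul t (iterSq mul w (n + 1)) = iterSq mul w (n + 2) := by
  rw [iterSq, hld, h]
  rfl

lemma mul_iterSq_of_le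
    (hld : ∀ a b c, mul a (mul b c) = mul (mul a b) (mul a c)) {t w : M} {n m : ℕ}
    (hnm : n ≤ m)
    (h : mul t (iterSq mul w n) = iterSq mul w (n + 1)) :
    mul t (iterSq mul w m) = iterSq mul w (m + 1) := by
  induction m, hnm using Nat.le_induction with
  | base => exact h
  | succ m _ ih => exact mul_iterSq_succ hld ih

lemma mul_mul_iterSq
    (hld : ∀ a b c, mul a (mul b c) = mul (mul a b) (mul a c)) {a b w : M} {n : ℕ}
    (ha : mul a (iterSq mul w n) = iterSq mul w (n + 1))
    (hb : mul b (iterSq mul w n) = iterSq mul w (n + 1)) :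
    mul (mul a b) (iterSq mul w (n + 1)) = iterSq mul w (n + 2) := by
  rw [← ha, ← hld, hb, mul_iterSq_succ hld ha]

lemma exists_mul_mul_iterSq
    (hld : ∀ a b c, mul a (mul b c) = mul (mul a b) (mul a c)) {a b w : M}
    (ha : ∃ n, mul a (iterSq mul w n) = iterSq mul w (n + 1))
    (hb : ∃ n, mul b (iterSq mul w n) = iterSq mul w (n + 1)) :
    ∃ n, mul (mul a b) (iterSq mul w n) = iterSq mul w (n + 1) := by
  obtain ⟨na, ha⟩ := ha
  obtain ⟨nb, hb⟩ := hb
  exact ⟨max na nb + 1, mul_mul_iterSq hld (mul_iterSq_of_le hld (le_max_left _ _) ha)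
    (mul_iterSq_of_le hld (le_max_right _ _) hb)⟩

end LeftDistrib

namespace FreeLD

lemma mul_left_distrib (a b c : FreeLD) : mul a (mul b c) = mul (mul a b) (mul a c) := by
  induction a using Quot.ind
  induction b using Quot.ind
  induction c using Quot.ind
  exact Quot.sound (LDRel.ld _ _ _)

@[elab_as_elim]
lemma induction_on {P : FreeLD → Prop} (t : FreeLD) (hx : P x)
    (hmul : ∀ a b, P a → P b → P (mul a b)) : P t := by
  induction t using Quot.ind with | _ t =>
  induction t with
  | ih1 => exact hx
  | ih2 a b ha hb => exact hmul _ _ ha hb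

lemma exists_mul_iterSq_x (t : FreeLD) :
    ∃ n, mul t (iterSq mul x n) = iterSq mul x (n + 1) :=
  t.induction_on ⟨0, rfl⟩ fun _ _ => exists_mul_mul_iterSq mul_left_distrib

end FreeLD

theorem ltL_iterSq_eventually (p : FreeLD) :
    ∃ N : ℕ, ∀ n ≥ N, LtL FreeLD.mul p (iterSq FreeLD.mul FreeLD.x n) := by
  obtain ⟨N, hN⟩ := p.exists_mul_iterSq_x
  exact ⟨N + 1, fun _ hn => ltL_iterSq_of_mul_iterSq hN hn⟩
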